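/- Consider the lateral error dynamics ỹ' = sin θ̃, θ̃' = -k₁ỹ·(sin θ̃)/θ̃ - k₂θ̃ - k₃(1/d_L + 1/d_R)sin θ̃ with d_L = w - ỹ - ε_w, d_R = w + ỹ - ε_w, k₁,k₂,k₃ > 0, w > ε_w > 0. If the initial condition satisfies k₁ỹ(0)² + θ̃(0)² < (π/2 - ε₁)² for some ε₁ ∈ (0, π/2), then |θ̃(t)| < π/2 - ε₁ for all t as long as d_L, d_R remain positive. -/

import Mathlib

/-!
Along solutions, `L = k₁ ỹ² + θ̃²` has derivative `-2 (k₂ θ̃² + k₃ (1/d_L + 1/d_R) θ̃ sin θ̃)`: the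
`sin θ̃ / θ̃` term of `θ̃'` is designed to cancel the cross term `2 k₁ ỹ sin θ̃`. While
`d_L, d_R > 0` and `|θ̃| ≤ π`, this is nonpositive, and `L < (π/2 - ε₁)²` forces `|θ̃| < π/2 - ε₁`.
Hence `L` cannot climb to the level `(π/2 - ε₁)²`: at the first time it did, it would have been
nonincreasing on the way up.
-/

open Real Set

theorem lt_of_deriv_nonpos_of_lt {f : ℝ → ℝ} {a b c : ℝ} (hab : a ≤ b)
    (hf : ContinuousOn f (Icc a b)) (hf' : DifferentiableOn ℝ f (Ioo a b))
    (hderiv : ∀ x ∈ Ioo a b, f x < c → deriv f x ≤ 0) (ha : f a < c) : f b < c := by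
  by_contra! hb
  set S := Icc a b ∩ f ⁻¹' Ici c
  have hS : IsClosed S := hf.preimage_isClosed_of_isClosed isClosed_Icc isClosed_Ici
  have hSbdd : BddBelow S := ⟨a, fun x hx => hx.1.1⟩
  have hs₀ : sInf S ∈ S := hS.csInf_mem ⟨b, ⟨hab, le_rfl⟩, hb⟩ hSbdd
  have hs₀b : sInf S ≤ b := hs₀.1.2
  have hbelow : ∀ x ∈ Ico a (sInf S), f x < c := fun x hx => by
    by_contra! hcx
    exact (csInf_le hSbdd ⟨⟨hx.1, hx.2.le.trans hs₀b⟩, hcx⟩).not_gt hx.2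
  have hanti : AntitoneOn f (Icc a (sInf S)) := by
    refine antitoneOn_of_deriv_nonpos (convex_Icc _ _) (hf.mono (Icc_subset_Icc_right hs₀b)) ?_ ?_
      <;> rw [interior_Icc]
    · exact hf'.mono (Ioo_subset_Ioo_right hs₀b)
    · exact fun x hx => hderiv x ⟨hx.1, hx.2.trans_le hs₀b⟩ (hbelow x ⟨hx.1.le, hx.2⟩)
  have hmono : f (sInf S) ≤ f a :=
    hanti (left_mem_Icc.2 hs₀.1.1) (right_mem_Icc.2 hs₀.1.1) hs₀.1.1
  exact (hs₀.2.trans hmono).not_gt ha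

theorem mul_sin_nonneg_of_abs_le_pi {x : ℝ} (hx : |x| ≤ π) : 0 ≤ x * sin x := by
  obtain ⟨hx₁, hx₂⟩ := abs_le.1 hx
  rcases le_total 0 x with h | h
  · exact mul_nonneg h (sin_nonneg_of_nonneg_of_le_pi h hx₂)
  · rw [← neg_mul_neg, ← sin_neg]
    exact mul_nonneg (neg_nonneg.2 h) (sin_nonneg_of_nonneg_of_le_pi (neg_nonneg.2 h) (by linarith))

theorem hasDerivAt_lyapunov {y θ : ℝ → ℝ} {k₁ k₂ D t : ℝ} (hy : HasDerivAt y (sin (θ t)) t)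
    (hθ : HasDerivAt θ (-k₁ * y t * (sin (θ t) / θ t) - k₂ * θ t - D * sin (θ t)) t) :
    HasDerivAt (fun s => k₁ * y s ^ 2 + θ s ^ 2)
      (-2 * (k₂ * θ t ^ 2 + D * (θ t * sin (θ t)))) t := by
  -- at `θ t = 0` the junk value `sin 0 / 0 = 0` is harmless, since `sin 0 = 0`
  have hcancel : θ t * (sin (θ t) / θ t) = sin (θ t) :=
    mul_div_cancel_of_imp' fun h => by simp [h]
  refine ((hy.fun_pow 2).const_mul k₁ |>.add (hθ.fun_pow 2)).congr_deriv ?_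
  push_cast
  linear_combination (-2 * k₁ * y t) * hcancel

theorem stmt_8_general
    (y θ : ℝ → ℝ) (k₁ k₂ k₃ w εw ε₁ : ℝ)
    (hk₁ : 0 < k₁) (hk₂ : 0 < k₂) (hk₃ : 0 < k₃)
    (hε₁ : 0 < ε₁) (hε₁' : ε₁ < π / 2)
    (hy : ∀ t, HasDerivAt y (Real.sin (θ t)) t)
    (hθ : ∀ t, HasDerivAt θ
      (-k₁ * y t * (Real.sin (θ t) / θ t) - k₂ * θ t
        - k₃ * (1 / (w - y t - εw) + 1 / (w + y t - εw)) * Real.sin (θ t)) t)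
    (h0 : k₁ * (y 0)^2 + (θ 0)^2 < (π / 2 - ε₁)^2) :
    ∀ t ≥ (0:ℝ),
      (∀ s ∈ Set.Icc (0:ℝ) t, w - y s - εw > 0 ∧ w + y s - εw > 0) →
      |θ t| < π / 2 - ε₁ := by
  intro t ht hd
  have hL s := hasDerivAt_lyapunov (hy s) (hθ s)
  have habs : ∀ s, k₁ * y s ^ 2 + θ s ^ 2 < (π / 2 - ε₁) ^ 2 → |θ s| < π / 2 - ε₁ :=
    fun s hs => abs_lt_of_sq_lt_sq (by nlinarith [sq_nonneg (y s)]) (by linarith)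
  refine habs t (lt_of_deriv_nonpos_of_lt (f := fun s => k₁ * y s ^ 2 + θ s ^ 2) ht ?_ ?_ (fun s hs hLs => ?_) h0)
  · exact fun s _ => (hL s).continuousAt.continuousWithinAt
  · exact fun s _ => (hL s).differentiableAt.differentiableWithinAt
  obtain ⟨hdL, hdR⟩ := hd s (Ioo_subset_Icc_self hs)
  have hsin := mul_sin_nonneg_of_abs_le_pi ((habs s hLs).le.trans (by linarith [pi_pos]))
  have hD : 0 ≤ k₃ * (1 / (w - y s - εw) + 1 / (w + y s - εw)) := by positivity
  rw [(hL s).deriv]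
  nlinarith [mul_nonneg hk₂.le (sq_nonneg (θ s)), mul_nonneg hD hsin]

/-- Forward invariance of the sublevel set: if
k₁ỹ(0)² + θ̃(0)² < (π/2 - ε₁)², then |θ̃(t)| < π/2 - ε₁ as long as the
lateral safety distances d_L, d_R have remained positive. -/
theorem stmt_8
    (y θ : ℝ → ℝ) (k₁ k₂ k₃ w εw ε₁ : ℝ)
    (hk₁ : 0 < k₁) (hk₂ : 0 < k₂) (hk₃ : 0 < k₃)
    (hw : εw < w) (hεw : 0 < εw)
    (hε₁ : 0 < ε₁) (hε₁' : ε₁ < π / 2)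
    (hy : ∀ t, HasDerivAt y (Real.sin (θ t)) t)
    (hθ : ∀ t, HasDerivAt θ
      (-k₁ * y t * (Real.sin (θ t) / θ t) - k₂ * θ t
        - k₃ * (1 / (w - y t - εw) + 1 / (w + y t - εw)) * Real.sin (θ t)) t)
    (h0 : k₁ * (y 0)^2 + (θ 0)^2 < (π / 2 - ε₁)^2) :
    ∀ t ≥ (0:ℝ),
      (∀ s ∈ Set.Icc (0:ℝ) t, w - y s - εw > 0 ∧ w + y s - εw > 0) →
      |θ t| < π / 2 - ε₁ :=
  stmt_8_general y θ k₁ k₂ k₃ w εw ε₁ hk₁ hk₂ hk₃ hε₁ hε₁' hy hθ h0
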